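/- For all real h and θ, the mirror image of R(h;θ) equals R(−h;−θ); that is, P ∘ R(h;θ)⁻¹ ∘ P = R(−h;−θ), where P is the permutation operator P(x⊗y) = y⊗x on ℝ²⊗ℝ². Equivalently, R(−h;−θ) ∘ P ∘ R(h;θ) = P. -/
import Mathlib


/-- The operator `R(h;θ)` on `ℝ²⊗ℝ²`, written as a matrix in the tensor basis
`e_i⊗e_j ↔ (i,j)`: the entry at row `(k,l)`, column `(i,j)` is the coefficient of
`e_k⊗e_l` in `R(e_i⊗e_j)`.  Explicitly: `R(e₀⊗e₀) = e₀⊗e₀`,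
`R(e₀⊗e₁) = e₁⊗e₀ + h·e₀⊗e₀`, `R(e₁⊗e₀) = e₀⊗e₁ − h·e₀⊗e₀`,
`R(e₁⊗e₁) = e₁⊗e₁ + θh²·e₀⊗e₀`. -/
def R2 (h θ : ℝ) : Matrix (Fin 2 × Fin 2) (Fin 2 × Fin 2) ℝ :=
  Matrix.of fun p q =>
    if q = (0, 0) then (if p = (0, 0) then 1 else 0)
    else if q = (0, 1) then (if p = (1, 0) then 1 else if p = (0, 0) then h else 0)
    else if q = (1, 0) then (if p = (0, 1) then 1 else if p = (0, 0) then -h else 0)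
    else (if p = (1, 1) then 1 else if p = (0, 0) then θ * h ^ 2 else 0)

/-- The permutation operator `P(x⊗y) = y⊗x` on `ℝ²⊗ℝ²`, as a matrix in the tensor
basis. -/
def P2 : Matrix (Fin 2 × Fin 2) (Fin 2 × Fin 2) ℝ :=
  Matrix.of fun p q => if p.1 = q.2 ∧ p.2 = q.1 then 1 else 0

lemma P2_sq : P2 * P2 = 1 := by
  ext ⟨i,j⟩ ⟨k,l⟩
  fin_cases i <;> fin_cases j <;> fin_cases k <;> fin_cases l <;>
    simp [P2, Matrix.mul_apply, Fintype.sum_prod_type, Fin.sum_univ_two,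
      Matrix.one_apply, Prod.ext_iff]

lemma R2_key (h θ : ℝ) : R2 (-h) (-θ) * P2 * R2 h θ = P2 := by
  ext ⟨i,j⟩ ⟨k,l⟩
  fin_cases i <;> fin_cases j <;> fin_cases k <;> fin_cases l <;>
    simp [R2, P2, Matrix.mul_apply, Fintype.sum_prod_type, Fin.sum_univ_two,
      Prod.ext_iff]

/-- The mirror image of `R(h;θ)` equals `R(−h;−θ)`: `P ∘ R(h;θ)⁻¹ ∘ P = R(−h;−θ)`;
equivalently, `R(−h;−θ) ∘ P ∘ R(h;θ) = P`. -/
theorem R2_mirror (h θ : ℝ) :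
    P2 * (R2 h θ)⁻¹ * P2 = R2 (-h) (-θ) ∧
    R2 (-h) (-θ) * P2 * R2 h θ = P2 := by
  refine ⟨?_, R2_key h θ⟩
  have hinv : (P2 * R2 (-h) (-θ) * P2) * R2 h θ = 1 := by
    have := congrArg (fun M => P2 * M) (R2_key h θ)
    simpa [Matrix.mul_assoc, P2_sq, ← Matrix.mul_assoc] using this
  have h2 : (R2 h θ)⁻¹ = P2 * R2 (-h) (-θ) * P2 :=
    (Matrix.inv_eq_left_inv hinv)
  rw [h2]
  calc P2 * (P2 * R2 (-h) (-θ) * P2) * P2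
      = (P2 * P2) * R2 (-h) (-θ) * (P2 * P2) := by simp only [Matrix.mul_assoc]
    _ = R2 (-h) (-θ) := by rw [P2_sq]; simp
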